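/- arXiv:2405.19667 — 3 statements merged into one kernel-verified Lean document; each statement's English description precedes it below -/
import Mathlib

section
/- (Improved per-step loss bound.) Under the same setup as the per-step loss control lemma — f'(x) = f(x) off E, π a best-response policy for f', π₀ a best-response policy for f that is constantly a₀ on E and agrees with π off E, Δ_a = {x ∈ E : π(x) = a}, and ‖E_{(x,y)∼𝒟}[(y − f'(x)) · 1_{Δ_a}(x)]‖₂ ≤ β for all a ∈ [K] — define δ = max_{a'∈[K]} E_{(x,y)∼𝒟}[(ℓ(y, a₀) − ℓ(y, a')) · 1_E(x)]. Then E_{(x,y)∼𝒟}[ℓ(y, π(x))] − E_{(x,y)∼𝒟}[ℓ(y, π₀(x))] ≤ β √d K − δ. In particular, if δ > 0 and β ≤ δ/(√d K), the expected decision loss does not increase. -/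
open MeasureTheory
open scoped RealInnerProductSpace

private lemma euclid_norm_le_sqrt {d : ℕ} (v : EuclideanSpace ℝ (Fin d))
    (h : ∀ j, |v j| ≤ 1) : ‖v‖ ≤ Real.sqrt d := by
  rw [EuclideanSpace.norm_eq]
  apply Real.sqrt_le_sqrt
  calc ∑ i, ‖v i‖ ^ 2 ≤ ∑ _i : Fin d, (1:ℝ) := by
        apply Finset.sum_le_sum
        intro i _
        have h1 : ‖v i‖ ≤ 1 := by simpa [Real.norm_eq_abs] using h i
        nlinarith [norm_nonneg (v i)]
    _ = d := by simp

private lemma integrable_of_ae_bound' {α : Type*} [MeasurableSpace α]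
    {μ : Measure α} [IsFiniteMeasure μ] {E : Type*} [NormedAddCommGroup E]
    {f : α → E} (C : ℝ) (hm : AEStronglyMeasurable f μ)
    (hb : ∀ᵐ x ∂μ, ‖f x‖ ≤ C) : Integrable f μ :=
  (integrable_const C).mono' hm hb

/-- Improved per-step loss bound.  Under the same setup as the per-step
loss control lemma, with `δ = max_{a'} E[(ℓ(y,a₀) - ℓ(y,a'))·1_E(x)]`, the increase in
expected decision loss is at most `β √d K - δ`; in particular if `δ > 0` and
`β ≤ δ/(√d K)` the expected decision loss does not increase. -/
theorem improved_per_step_loss_bound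
    {X : Type*} [MeasurableSpace X] {d K : ℕ} (hK : 0 < K)
    (𝒟 : Measure (X × EuclideanSpace ℝ (Fin d))) [IsProbabilityMeasure 𝒟]
    (hY : ∀ᵐ p ∂𝒟, ∀ j, p.2 j ∈ Set.Icc (0 : ℝ) 1)
    (ℓ : Fin K → EuclideanSpace ℝ (Fin d)) (hℓ : ∀ a j, ℓ a j ∈ Set.Icc (0 : ℝ) 1)
    (E : Set X) (hE_meas : MeasurableSet E)
    (f f' : X → EuclideanSpace ℝ (Fin d))
    (hf_meas : Measurable f) (hf'_meas : Measurable f')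
    (hf_range : ∀ x j, f x j ∈ Set.Icc (0 : ℝ) 1)
    (hf'_range : ∀ x j, f' x j ∈ Set.Icc (0 : ℝ) 1)
    (hagree : ∀ x ∉ E, f' x = f x)
    (π π₀ : X → Fin K) (hπ_meas : Measurable π) (hπ₀_meas : Measurable π₀)
    (hπ_br : ∀ x a, ⟪f' x, ℓ (π x)⟫ ≤ ⟪f' x, ℓ a⟫)
    (hπ₀_br : ∀ x a, ⟪f x, ℓ (π₀ x)⟫ ≤ ⟪f x, ℓ a⟫)
    (a₀ : Fin K) (hπ₀_const : ∀ x ∈ E, π₀ x = a₀)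
    (hπ_agree : ∀ x ∉ E, π x = π₀ x)
    (β : ℝ) (hβ : 0 < β)
    (hcal : ∀ a : Fin K,
      ‖∫ p, Set.indicator {q : X × EuclideanSpace ℝ (Fin d) | q.1 ∈ E ∧ π q.1 = a}
          (fun q => q.2 - f' q.1) p ∂𝒟‖ ≤ β)
    (δ : ℝ)
    (hδ : δ = ⨆ a' : Fin K,
      ∫ p, Set.indicator {q : X × EuclideanSpace ℝ (Fin d) | q.1 ∈ E}
        (fun q => ⟪q.2, ℓ a₀⟫ - ⟪q.2, ℓ a'⟫) p ∂𝒟) :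
    ((∫ p, ⟪p.2, ℓ (π p.1)⟫ ∂𝒟) - (∫ p, ⟪p.2, ℓ (π₀ p.1)⟫ ∂𝒟)
        ≤ β * Real.sqrt d * K - δ)
    ∧ (0 < δ → β ≤ δ / (Real.sqrt d * K) →
        (∫ p, ⟪p.2, ℓ (π p.1)⟫ ∂𝒟) - (∫ p, ⟪p.2, ℓ (π₀ p.1)⟫ ∂𝒟) ≤ 0) := by
  haveI : Nonempty (Fin K) := ⟨⟨0, hK⟩⟩
  
  set T : Set (X × EuclideanSpace ℝ (Fin d)) := {q : X × EuclideanSpace ℝ (Fin d) | q.1 ∈ E} with hT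
  set S : Fin K → Set (X × EuclideanSpace ℝ (Fin d)) := fun a => {q : X × EuclideanSpace ℝ (Fin d) | q.1 ∈ E ∧ π q.1 = a} with hS
  -- norm bounds
  have hy_norm : ∀ᵐ p ∂𝒟, ‖p.2‖ ≤ Real.sqrt d := by
    filter_upwards [hY] with p hp
    exact euclid_norm_le_sqrt _ fun j => abs_le.2 ⟨by linarith [(hp j).1], (hp j).2⟩
  have hℓ_norm : ∀ a, ‖ℓ a‖ ≤ Real.sqrt d := fun a =>
    euclid_norm_le_sqrt _ fun j => abs_le.2 ⟨by linarith [(hℓ a j).1], (hℓ a j).2⟩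
  have hℓdiff : ∀ a b : Fin K, ‖ℓ a - ℓ b‖ ≤ Real.sqrt d := by
    intro a b
    apply euclid_norm_le_sqrt
    intro j
    have h1 := hℓ a j; have h2 := hℓ b j
    have : (ℓ a - ℓ b) j = ℓ a j - ℓ b j := rfl
    rw [this]
    exact abs_le.2 ⟨by linarith [h1.1, h2.2], by linarith [h1.2, h2.1]⟩
  have hf'_norm : ∀ x, ‖f' x‖ ≤ Real.sqrt d := fun x =>
    euclid_norm_le_sqrt _ fun j => abs_le.2 ⟨by linarith [(hf'_range x j).1], (hf'_range x j).2⟩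
  -- measurability of sets
  have hT_meas : MeasurableSet T := measurable_fst hE_meas
  have hS_meas : ∀ a, MeasurableSet (S a) := by
    intro a
    have h1 : MeasurableSet {q : X × EuclideanSpace ℝ (Fin d) | q.1 ∈ E} := measurable_fst hE_meas
    have h2 : MeasurableSet {q : X × EuclideanSpace ℝ (Fin d) | π q.1 = a} :=
      (hπ_meas.comp measurable_fst) (measurableSet_singleton a)
    exact h1.inter h2
  -- generic integrability
  have hintA : ∀ (w : X × EuclideanSpace ℝ (Fin d) → EuclideanSpace ℝ (Fin d)), Measurable w → (∀ p, ‖w p‖ ≤ Real.sqrt d) →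
      Integrable (fun p : X × EuclideanSpace ℝ (Fin d) => ⟪p.2, w p⟫) 𝒟 := by
    intro w hw hwb
    refine integrable_of_ae_bound' (Real.sqrt d * Real.sqrt d)
      (measurable_snd.inner hw).aestronglyMeasurable ?_
    filter_upwards [hy_norm] with p hp
    exact (norm_inner_le_norm _ _).trans
      (mul_le_mul hp (hwb p) (norm_nonneg _) (Real.sqrt_nonneg _))
  have hintπ : Integrable (fun p : X × EuclideanSpace ℝ (Fin d) => ⟪p.2, ℓ (π p.1)⟫) 𝒟 :=
    hintA _ (measurable_from_top.comp (hπ_meas.comp measurable_fst)) fun p => hℓ_norm _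
  have hintπ₀ : Integrable (fun p : X × EuclideanSpace ℝ (Fin d) => ⟪p.2, ℓ (π₀ p.1)⟫) 𝒟 :=
    hintA _ (measurable_from_top.comp (hπ₀_meas.comp measurable_fst)) fun p => hℓ_norm _
  have hinta : ∀ a : Fin K, Integrable (fun p : X × EuclideanSpace ℝ (Fin d) => ⟪p.2, ℓ a⟫) 𝒟 := fun a =>
    hintA _ measurable_const fun p => hℓ_norm _
  -- integrability of vector indicator
  have hintV : ∀ a : Fin K, Integrable ((S a).indicator (fun q : X × EuclideanSpace ℝ (Fin d) => q.2 - f' q.1)) 𝒟 := by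
    intro a
    refine integrable_of_ae_bound' (Real.sqrt d + Real.sqrt d)
      ((measurable_snd.sub (hf'_meas.comp measurable_fst)).indicator (hS_meas a)).aestronglyMeasurable ?_
    filter_upwards [hy_norm] with p hp
    refine (norm_indicator_le_norm_self _ _).trans ?_
    exact (norm_sub_le _ _).trans (add_le_add hp (hf'_norm _))
  -- choose maximizer a'
  obtain ⟨a', ha'⟩ := Finite.exists_max (fun a : Fin K =>
    ∫ p, T.indicator (fun q : X × EuclideanSpace ℝ (Fin d) => ⟪q.2, ℓ a₀⟫ - ⟪q.2, ℓ a⟫) p ∂𝒟)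
  have hδle : δ ≤ ∫ p, T.indicator (fun q : X × EuclideanSpace ℝ (Fin d) => ⟪q.2, ℓ a₀⟫ - ⟪q.2, ℓ a'⟫) p ∂𝒟 := by
    rw [hδ]; exact ciSup_le ha'
  -- integrability of scalar indicator pieces
  have hintSa : ∀ a : Fin K,
      Integrable ((S a).indicator (fun q : X × EuclideanSpace ℝ (Fin d) => ⟪q.2, ℓ a⟫ - ⟪q.2, ℓ a'⟫)) 𝒟 :=
    fun a => ((hinta a).sub (hinta a')).indicator (hS_meas a)
  have hintT : Integrable (T.indicator (fun q : X × EuclideanSpace ℝ (Fin d) => ⟪q.2, ℓ a'⟫ - ⟪q.2, ℓ a₀⟫)) 𝒟 :=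
    ((hinta a').sub (hinta a₀)).indicator hT_meas
  -- pointwise decomposition
  have hpt : ∀ p : X × EuclideanSpace ℝ (Fin d), ⟪p.2, ℓ (π p.1)⟫ - ⟪p.2, ℓ (π₀ p.1)⟫
      = (∑ a : Fin K, (S a).indicator (fun q : X × EuclideanSpace ℝ (Fin d) => ⟪q.2, ℓ a⟫ - ⟪q.2, ℓ a'⟫) p)
        + T.indicator (fun q : X × EuclideanSpace ℝ (Fin d) => ⟪q.2, ℓ a'⟫ - ⟪q.2, ℓ a₀⟫) p := by
    intro p
    by_cases hp : p.1 ∈ E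
    · have hsum : (∑ a : Fin K, (S a).indicator
          (fun q : X × EuclideanSpace ℝ (Fin d) => ⟪q.2, ℓ a⟫ - ⟪q.2, ℓ a'⟫) p)
          = ⟪p.2, ℓ (π p.1)⟫ - ⟪p.2, ℓ a'⟫ := by
        rw [Finset.sum_eq_single (π p.1)]
        · exact Set.indicator_of_mem (show p ∈ S (π p.1) from ⟨hp, rfl⟩) _
        · intro a _ hne
          exact Set.indicator_of_notMem (fun hmem => hne hmem.2.symm) _
        · intro h; exact absurd (Finset.mem_univ _) h
      rw [hsum, Set.indicator_of_mem (show p ∈ T from hp), hπ₀_const p.1 hp]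
      ring
    · have h0 : π p.1 = π₀ p.1 := hπ_agree p.1 hp
      have hsum : (∑ a : Fin K, (S a).indicator
          (fun q : X × EuclideanSpace ℝ (Fin d) => ⟪q.2, ℓ a⟫ - ⟪q.2, ℓ a'⟫) p) = 0 := by
        apply Finset.sum_eq_zero
        intro a _
        exact Set.indicator_of_notMem (fun hmem => hp hmem.1) _
      rw [hsum, Set.indicator_of_notMem (show p ∉ T from hp), h0]
      ring
  -- integral decomposition
  have hdecomp : (∫ p, ⟪p.2, ℓ (π p.1)⟫ ∂𝒟) - (∫ p, ⟪p.2, ℓ (π₀ p.1)⟫ ∂𝒟)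
      = (∑ a : Fin K, ∫ p, (S a).indicator (fun q : X × EuclideanSpace ℝ (Fin d) => ⟪q.2, ℓ a⟫ - ⟪q.2, ℓ a'⟫) p ∂𝒟)
        + ∫ p, T.indicator (fun q : X × EuclideanSpace ℝ (Fin d) => ⟪q.2, ℓ a'⟫ - ⟪q.2, ℓ a₀⟫) p ∂𝒟 := by
    rw [← integral_sub hintπ hintπ₀, ← integral_finset_sum _ (fun a _ => hintSa a),
      ← integral_add (integrable_finset_sum _ (fun a _ => hintSa a)) hintT]
    exact integral_congr_ae (Filter.Eventually.of_forall hpt)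
  -- per-a bound
  have hterm : ∀ a : Fin K,
      ∫ p, (S a).indicator (fun q : X × EuclideanSpace ℝ (Fin d) => ⟪q.2, ℓ a⟫ - ⟪q.2, ℓ a'⟫) p ∂𝒟
        ≤ β * Real.sqrt d := by
    intro a
    have hsplit : ∀ p : X × EuclideanSpace ℝ (Fin d),
        (S a).indicator (fun q : X × EuclideanSpace ℝ (Fin d) => ⟪q.2, ℓ a⟫ - ⟪q.2, ℓ a'⟫) p
        = ⟪ℓ a - ℓ a', (S a).indicator (fun q : X × EuclideanSpace ℝ (Fin d) => q.2 - f' q.1) p⟫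
          + (S a).indicator (fun q : X × EuclideanSpace ℝ (Fin d) => ⟪f' q.1, ℓ a⟫ - ⟪f' q.1, ℓ a'⟫) p := by
      intro p
      by_cases hp : p ∈ S a
      · rw [Set.indicator_of_mem hp, Set.indicator_of_mem hp, Set.indicator_of_mem hp]
        simp only [inner_sub_left, inner_sub_right]
        rw [real_inner_comm (ℓ a) p.2, real_inner_comm (ℓ a') p.2,
          real_inner_comm (ℓ a) (f' p.1), real_inner_comm (ℓ a') (f' p.1)]
        ring
      · rw [Set.indicator_of_notMem hp, Set.indicator_of_notMem hp,
          Set.indicator_of_notMem hp, inner_zero_right]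
        ring
    have hintB : Integrable
        ((S a).indicator (fun q : X × EuclideanSpace ℝ (Fin d) => ⟪f' q.1, ℓ a⟫ - ⟪f' q.1, ℓ a'⟫)) 𝒟 := by
      refine Integrable.indicator ?_ (hS_meas a)
      refine integrable_of_ae_bound' (Real.sqrt d * Real.sqrt d + Real.sqrt d * Real.sqrt d)
        (((hf'_meas.comp measurable_fst).inner measurable_const).sub
          ((hf'_meas.comp measurable_fst).inner measurable_const)).aestronglyMeasurable ?_
      refine Filter.Eventually.of_forall fun p => ?_
      refine (norm_sub_le _ _).trans (add_le_add ?_ ?_) <;>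
        exact (norm_inner_le_norm _ _).trans
          (mul_le_mul (hf'_norm _) (hℓ_norm _) (norm_nonneg _) (Real.sqrt_nonneg _))
    have hintAterm : Integrable
        (fun p => ⟪ℓ a - ℓ a', (S a).indicator (fun q : X × EuclideanSpace ℝ (Fin d) => q.2 - f' q.1) p⟫) 𝒟 :=
      (hintV a).const_inner (ℓ a - ℓ a')
    calc ∫ p, (S a).indicator (fun q : X × EuclideanSpace ℝ (Fin d) => ⟪q.2, ℓ a⟫ - ⟪q.2, ℓ a'⟫) p ∂𝒟
        = (∫ p, ⟪ℓ a - ℓ a', (S a).indicator (fun q : X × EuclideanSpace ℝ (Fin d) => q.2 - f' q.1) p⟫ ∂𝒟)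
          + ∫ p, (S a).indicator (fun q : X × EuclideanSpace ℝ (Fin d) => ⟪f' q.1, ℓ a⟫ - ⟪f' q.1, ℓ a'⟫) p ∂𝒟 := by
          rw [← integral_add hintAterm hintB]
          exact integral_congr_ae (Filter.Eventually.of_forall hsplit)
      _ ≤ Real.sqrt d * β + 0 := by
          gcongr
          · calc ∫ p, ⟪ℓ a - ℓ a', (S a).indicator (fun q : X × EuclideanSpace ℝ (Fin d) => q.2 - f' q.1) p⟫ ∂𝒟
                = ⟪ℓ a - ℓ a', ∫ p, (S a).indicator (fun q : X × EuclideanSpace ℝ (Fin d) => q.2 - f' q.1) p ∂𝒟⟫ :=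
                  integral_inner (hintV a) _
              _ ≤ ‖ℓ a - ℓ a'‖ * ‖∫ p, (S a).indicator (fun q : X × EuclideanSpace ℝ (Fin d) => q.2 - f' q.1) p ∂𝒟‖ :=
                  real_inner_le_norm _ _
              _ ≤ Real.sqrt d * β :=
                  mul_le_mul (hℓdiff a a') (hcal a) (norm_nonneg _) (Real.sqrt_nonneg _)
          · apply integral_nonpos
            intro p
            apply Set.indicator_nonpos
            intro q hq
            have := hπ_br q.1 a'
            rw [hq.2] at this
            linarith
      _ = β * Real.sqrt d := by ring
  -- δ-term bound
  have hδterm : ∫ p, T.indicator (fun q : X × EuclideanSpace ℝ (Fin d) => ⟪q.2, ℓ a'⟫ - ⟪q.2, ℓ a₀⟫) p ∂𝒟 ≤ -δ := by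
    have hneg : ∀ p, T.indicator (fun q : X × EuclideanSpace ℝ (Fin d) => ⟪q.2, ℓ a'⟫ - ⟪q.2, ℓ a₀⟫) p
        = -(T.indicator (fun q : X × EuclideanSpace ℝ (Fin d) => ⟪q.2, ℓ a₀⟫ - ⟪q.2, ℓ a'⟫) p) := by
      intro p
      by_cases hp : p ∈ T
      · rw [Set.indicator_of_mem hp, Set.indicator_of_mem hp]; ring
      · rw [Set.indicator_of_notMem hp, Set.indicator_of_notMem hp]; ring
    calc ∫ p, T.indicator (fun q : X × EuclideanSpace ℝ (Fin d) => ⟪q.2, ℓ a'⟫ - ⟪q.2, ℓ a₀⟫) p ∂𝒟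
        = -∫ p, T.indicator (fun q : X × EuclideanSpace ℝ (Fin d) => ⟪q.2, ℓ a₀⟫ - ⟪q.2, ℓ a'⟫) p ∂𝒟 := by
          rw [← integral_neg]
          exact integral_congr_ae (Filter.Eventually.of_forall hneg)
      _ ≤ -δ := by linarith
  -- main bound
  have hmain : (∫ p, ⟪p.2, ℓ (π p.1)⟫ ∂𝒟) - (∫ p, ⟪p.2, ℓ (π₀ p.1)⟫ ∂𝒟)
      ≤ β * Real.sqrt d * K - δ := by
    rw [hdecomp]
    calc (∑ a : Fin K, ∫ p, (S a).indicator (fun q : X × EuclideanSpace ℝ (Fin d) => ⟪q.2, ℓ a⟫ - ⟪q.2, ℓ a'⟫) p ∂𝒟)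
          + ∫ p, T.indicator (fun q : X × EuclideanSpace ℝ (Fin d) => ⟪q.2, ℓ a'⟫ - ⟪q.2, ℓ a₀⟫) p ∂𝒟
        ≤ (∑ _a : Fin K, β * Real.sqrt d) + (-δ) :=
          add_le_add (Finset.sum_le_sum fun a _ => hterm a) hδterm
      _ = β * Real.sqrt d * K - δ := by
          rw [Finset.sum_const, Finset.card_univ, Fintype.card_fin]
          ring
  refine ⟨hmain, fun hδpos hβle => ?_⟩
  by_cases hd : d = 0
  · subst hd
    simp only [Nat.cast_zero, Real.sqrt_zero, zero_mul, div_zero] at hβle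
    linarith
  · have hc : 0 < Real.sqrt d * K :=
      mul_pos (Real.sqrt_pos.2 (by exact_mod_cast Nat.pos_of_ne_zero hd))
        (by exact_mod_cast hK)
    have : β * (Real.sqrt d * K) ≤ δ := (le_div_iff₀ hc).1 hβle
    nlinarith [hmain]
end

section
/- (Guaranteed Brier improvement from a large disagreement event.) Let f₁, f₂ : 𝒳 → [0,1]^d be predictors, ℓ a linear loss with vectors ℓ_a ∈ [0,1]^d, α > 0, η > 0, and let E = E^α_{ℓ,a₁,a₂}(f₁, f₂) be the disagreement event with μ(E) ≥ η, i.e. the set of x such that π_ℓ^BR(f₁(x)) = a₁ ≠ a₂ = π_ℓ^BR(f₂(x)) and either ⟨f₁(x), ℓ_{a₂} − ℓ_{a₁}⟩ > α or ⟨f₂(x), ℓ_{a₁} − ℓ_{a₂}⟩ > α. Then there exists i ∈ {1,2} such that, setting φ = E_{(x,y)∼𝒟}[y − f_i(x) | E] and f_i'(x) = proj_{[0,1]^d}(f_i(x) + φ·1_E(x)), the Brier score decreases by B(f_i, 𝒟) − B(f_i', 𝒟) ≥ α²η / (4d). -/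
/-!
On `E` both best-response margins are nonnegative and one exceeds `α`, so
`⟪f₁ x - f₂ x, ℓ a₂ - ℓ a₁⟫ > α`.
Averaging over `E`, the conditional mean residuals `φᵢ = ⨍_E (y - fᵢ)` satisfy
`⟪ℓ a₂ - ℓ a₁, φ₂ - φ₁⟫ ≥ α`, and as `‖ℓ a₂ - ℓ a₁‖² ≤ d` one of them has `‖φᵢ‖² ≥ α² / (4d)`.
Adding `φᵢ` on `E` moves the mean residual on `E` to zero, which lowers the Brier score by
exactly `μ(E) ‖φᵢ‖²`; projecting back onto the cube, which contains the labels, can only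
lower it further.
-/

open MeasureTheory
open scoped RealInnerProductSpace
/-- The Euclidean projection onto the cube `[0,1]^d` (coordinatewise clamping). -/
noncomputable def projCube {d : ℕ} (v : EuclideanSpace ℝ (Fin d)) :
    EuclideanSpace ℝ (Fin d) :=
  WithLp.toLp 2 (fun j => min 1 (max 0 (v j)))

section Cube

variable {d : ℕ}

lemma norm_sub_sq_le_of_mem_Icc {x y : EuclideanSpace ℝ (Fin d)}
    (hx : ∀ j, x j ∈ Set.Icc (0 : ℝ) 1) (hy : ∀ j, y j ∈ Set.Icc (0 : ℝ) 1) :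
    ‖x - y‖ ^ 2 ≤ d := by
  rw [EuclideanSpace.real_norm_sq_eq]
  calc ∑ j, (x - y) j ^ 2 ≤ ∑ _j : Fin d, (1 : ℝ) := Finset.sum_le_sum fun j _ => by
        obtain ⟨hx₀, hx₁⟩ := hx j
        obtain ⟨hy₀, hy₁⟩ := hy j
        rw [PiLp.sub_apply]
        nlinarith
    _ = d := by simp

lemma norm_sub_le_sqrt_of_mem_Icc {x y : EuclideanSpace ℝ (Fin d)}
    (hx : ∀ j, x j ∈ Set.Icc (0 : ℝ) 1) (hy : ∀ j, y j ∈ Set.Icc (0 : ℝ) 1) :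
    ‖x - y‖ ≤ √d :=
  Real.le_sqrt_of_sq_le (norm_sub_sq_le_of_mem_Icc hx hy)

lemma abs_min_one_max_zero_sub_le {v y : ℝ} (hy : y ∈ Set.Icc (0 : ℝ) 1) :
    |min 1 (max 0 v) - y| ≤ |v - y| := by
  calc |min 1 (max 0 v) - y| = |min 1 (max 0 v) - min 1 (max 0 y)| := by
        rw [max_eq_right hy.1, min_eq_right hy.2]
    _ ≤ max |1 - 1| |max 0 v - max 0 y| := abs_min_sub_min_le_max _ _ _ _
    _ ≤ |v - y| := by simpa [max_comm (0 : ℝ)] using abs_max_sub_max_le_abs v y 0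

lemma norm_projCube_sub_le (v : EuclideanSpace ℝ (Fin d)) {y : EuclideanSpace ℝ (Fin d)}
    (hy : ∀ j, y j ∈ Set.Icc (0 : ℝ) 1) : ‖projCube v - y‖ ≤ ‖v - y‖ := by
  rw [← sq_le_sq₀ (norm_nonneg _) (norm_nonneg _), EuclideanSpace.real_norm_sq_eq,
    EuclideanSpace.real_norm_sq_eq]
  refine Finset.sum_le_sum fun j _ => sq_le_sq.mpr ?_
  exact abs_min_one_max_zero_sub_le (hy j)

variable {Ω : Type*} [MeasurableSpace Ω] {μ : Measure Ω} [IsFiniteMeasure μ]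

lemma integrable_of_mem_Icc {F : Ω → EuclideanSpace ℝ (Fin d)} (hF : AEStronglyMeasurable F μ)
    (hFc : ∀ᵐ ω ∂μ, ∀ j, F ω j ∈ Set.Icc (0 : ℝ) 1) : Integrable F μ :=
  .of_bound hF √d <| hFc.mono fun ω hω => by
    simpa using norm_sub_le_sqrt_of_mem_Icc hω (y := 0) (by simp)

lemma integrable_norm_sub_sq_of_mem_Icc {F Y : Ω → EuclideanSpace ℝ (Fin d)}
    (hF : AEStronglyMeasurable F μ) (hY : AEStronglyMeasurable Y μ)
    (hFc : ∀ᵐ ω ∂μ, ∀ j, F ω j ∈ Set.Icc (0 : ℝ) 1)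
    (hYc : ∀ᵐ ω ∂μ, ∀ j, Y ω j ∈ Set.Icc (0 : ℝ) 1) :
    Integrable (fun ω => ‖F ω - Y ω‖ ^ 2) μ :=
  .of_bound ((hF.sub hY).norm.pow 2) d <| (hFc.and hYc).mono fun ω hω => by
    simpa using norm_sub_sq_le_of_mem_Icc hω.1 hω.2

end Cube

section Patch

variable {Ω E : Type*} [NormedAddCommGroup E] [InnerProductSpace ℝ E]

lemma norm_indicator_const_sub_sq (S : Set Ω) (c : E) (r : Ω → E) (ω : Ω) :
    ‖S.indicator (fun _ => c) ω - r ω‖ ^ 2 =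
      ‖r ω‖ ^ 2 + S.indicator (fun ω => ‖c‖ ^ 2 - 2 * ⟪c, r ω⟫) ω := by
  by_cases hω : ω ∈ S <;> simp [hω, norm_sub_sq_real]
  ring

variable [MeasurableSpace Ω] {μ : Measure Ω} [IsFiniteMeasure μ] {S : Set Ω} {r : Ω → E}

lemma integrable_indicator_norm_const_sq_sub_inner (hS : MeasurableSet S) (c : E)
    (hr : Integrable r μ) :
    Integrable (S.indicator fun ω => ‖c‖ ^ 2 - 2 * ⟪c, r ω⟫) μ :=
  ((integrable_const _).sub ((hr.const_inner c).const_mul 2)).indicator hS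

lemma integrable_norm_indicator_const_sub_sq (hS : MeasurableSet S) (c : E) (hr : Integrable r μ)
    (hr₂ : Integrable (fun ω => ‖r ω‖ ^ 2) μ) :
    Integrable (fun ω => ‖S.indicator (fun _ => c) ω - r ω‖ ^ 2) μ := by
  simp_rw [norm_indicator_const_sub_sq]
  exact hr₂.add (integrable_indicator_norm_const_sq_sub_inner hS c hr)

lemma integral_norm_indicator_const_sub_sq [CompleteSpace E] (hS : MeasurableSet S) (c : E)
    (hr : Integrable r μ) (hr₂ : Integrable (fun ω => ‖r ω‖ ^ 2) μ) :
    ∫ ω, ‖S.indicator (fun _ => c) ω - r ω‖ ^ 2 ∂μ =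
      ∫ ω, ‖r ω‖ ^ 2 ∂μ + (μ.real S * ‖c‖ ^ 2 - 2 * ⟪c, ∫ ω in S, r ω ∂μ⟫) := by
  simp_rw [norm_indicator_const_sub_sq]
  rw [integral_add hr₂ (integrable_indicator_norm_const_sq_sub_inner hS c hr),
    integral_indicator hS, integral_sub (integrable_const _)
      ((hr.const_inner c).integrableOn.const_mul 2),
    setIntegral_const, integral_const_mul, integral_inner hr.integrableOn, smul_eq_mul]

lemma integral_norm_indicator_setAverage_sub_sq [CompleteSpace E] (hS : MeasurableSet S)
    (hr : Integrable r μ) (hr₂ : Integrable (fun ω => ‖r ω‖ ^ 2) μ) :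
    ∫ ω, ‖S.indicator (fun _ => ⨍ ω in S, r ω ∂μ) ω - r ω‖ ^ 2 ∂μ =
      ∫ ω, ‖r ω‖ ^ 2 ∂μ - μ.real S * ‖⨍ ω in S, r ω ∂μ‖ ^ 2 := by
  rw [integral_norm_indicator_const_sub_sq hS _ hr hr₂,
    ← measure_smul_setAverage r (measure_ne_top μ S), real_inner_smul_right,
    real_inner_self_eq_norm_sq]
  ring

end Patch

section Brier

variable {Ω : Type*} [MeasurableSpace Ω] {μ : Measure Ω} [IsFiniteMeasure μ] {d : ℕ}

lemma integral_norm_projCube_patch_sub_sq_le {F Y : Ω → EuclideanSpace ℝ (Fin d)}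
    (hF : AEStronglyMeasurable F μ) (hY : AEStronglyMeasurable Y μ)
    (hFc : ∀ᵐ ω ∂μ, ∀ j, F ω j ∈ Set.Icc (0 : ℝ) 1)
    (hYc : ∀ᵐ ω ∂μ, ∀ j, Y ω j ∈ Set.Icc (0 : ℝ) 1) {S : Set Ω} (hS : MeasurableSet S) :
    ∫ ω, ‖projCube (F ω + S.indicator (fun _ => ⨍ ω in S, (Y ω - F ω) ∂μ) ω) - Y ω‖ ^ 2 ∂μ ≤
      ∫ ω, ‖F ω - Y ω‖ ^ 2 ∂μ - μ.real S * ‖⨍ ω in S, (Y ω - F ω) ∂μ‖ ^ 2 := by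
  set a := ⨍ ω in S, (Y ω - F ω) ∂μ
  have hr : Integrable (fun ω => Y ω - F ω) μ :=
    (integrable_of_mem_Icc hY hYc).sub (integrable_of_mem_Icc hF hFc)
  have hr₂ : Integrable (fun ω => ‖Y ω - F ω‖ ^ 2) μ :=
    integrable_norm_sub_sq_of_mem_Icc hY hF hYc hFc
  calc _ ≤ ∫ ω, ‖S.indicator (fun _ => a) ω - (Y ω - F ω)‖ ^ 2 ∂μ := by
        refine integral_mono_of_nonneg (.of_forall fun _ => by positivity)
          (integrable_norm_indicator_const_sub_sq hS a hr hr₂) (hYc.mono fun ω hω => ?_)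
        dsimp only
        rw [show S.indicator (fun _ => a) ω - (Y ω - F ω) = F ω + S.indicator (fun _ => a) ω - Y ω
          by abel]
        gcongr
        exact norm_projCube_sub_le _ hω
    _ = _ := by
        rw [integral_norm_indicator_setAverage_sub_sq hS hr hr₂]
        simp_rw [norm_sub_rev (Y _)]
        rfl

lemma brier_sub_brier_patch_ge {X : Type*} [MeasurableSpace X]
    {𝒟 : Measure (X × EuclideanSpace ℝ (Fin d))} [IsFiniteMeasure 𝒟]
    (hY : ∀ᵐ p ∂𝒟, ∀ j, p.2 j ∈ Set.Icc (0 : ℝ) 1)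
    {f : X → EuclideanSpace ℝ (Fin d)} (hf : Measurable f)
    (hf_range : ∀ x j, f x j ∈ Set.Icc (0 : ℝ) 1) {E : Set X} (hE : MeasurableSet E)
    {f' : X → EuclideanSpace ℝ (Fin d)}
    (hf' : ∀ x, f' x =
      projCube (f x + E.indicator (fun _ => ⨍ p in Prod.fst ⁻¹' E, (p.2 - f p.1) ∂𝒟) x)) :
    𝒟.real (Prod.fst ⁻¹' E) * ‖⨍ p in Prod.fst ⁻¹' E, (p.2 - f p.1) ∂𝒟‖ ^ 2 ≤
      (∫ p, ‖f p.1 - p.2‖ ^ 2 ∂𝒟) - ∫ p, ‖f' p.1 - p.2‖ ^ 2 ∂𝒟 := by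
  have := integral_norm_projCube_patch_sub_sq_le (hf.comp measurable_fst).aestronglyMeasurable
    measurable_snd.aestronglyMeasurable (.of_forall fun p => hf_range p.1) hY (measurable_fst hE)
  simp_rw [hf']
  exact le_sub_comm.mp this

lemma integrableOn_residual {X : Type*} [MeasurableSpace X]
    {𝒟 : Measure (X × EuclideanSpace ℝ (Fin d))} [IsFiniteMeasure 𝒟]
    (hY : ∀ᵐ p ∂𝒟, ∀ j, p.2 j ∈ Set.Icc (0 : ℝ) 1)
    {f : X → EuclideanSpace ℝ (Fin d)} (hf : Measurable f)
    (hf_range : ∀ x j, f x j ∈ Set.Icc (0 : ℝ) 1) (S : Set (X × EuclideanSpace ℝ (Fin d))) :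
    IntegrableOn (fun p => p.2 - f p.1) S 𝒟 :=
  ((integrable_of_mem_Icc measurable_snd.aestronglyMeasurable hY).sub
    (integrable_of_mem_Icc (hf.comp measurable_fst).aestronglyMeasurable
      (.of_forall fun p => hf_range p.1))).integrableOn

end Brier

section Disagreement

variable {E : Type*} [NormedAddCommGroup E] [InnerProductSpace ℝ E]

lemma lt_inner_sub_of_best_responses {u₁ u₂ w₁ w₂ : E} {α : ℝ} (h₁ : ⟪u₁, w₁⟫ ≤ ⟪u₁, w₂⟫)
    (h₂ : ⟪u₂, w₂⟫ ≤ ⟪u₂, w₁⟫) (h : α < ⟪u₁, w₂ - w₁⟫ ∨ α < ⟪u₂, w₁ - w₂⟫) :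
    α < ⟪w₂ - w₁, u₁ - u₂⟫ := by
  have hsplit : ⟪w₂ - w₁, u₁ - u₂⟫ = ⟪u₁, w₂ - w₁⟫ + ⟪u₂, w₁ - w₂⟫ := by
    simp only [inner_sub_left, inner_sub_right, real_inner_comm]
    ring
  have hn₁ : 0 ≤ ⟪u₁, w₂ - w₁⟫ := by rw [inner_sub_right]; linarith
  have hn₂ : 0 ≤ ⟪u₂, w₁ - w₂⟫ := by rw [inner_sub_right]; linarith
  rw [hsplit]
  rcases h with h | h <;> linarith

lemma sq_le_four_mul_norm_sq_of_le_inner_sub {v₁ v₂ w : E} {α D : ℝ} (hα : 0 ≤ α)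
    (hw : ‖w‖ ^ 2 ≤ D) (h : α ≤ ⟪w, v₂ - v₁⟫) :
    α ^ 2 ≤ 4 * D * ‖v₁‖ ^ 2 ∨ α ^ 2 ≤ 4 * D * ‖v₂‖ ^ 2 := by
  have hle : α ≤ ‖w‖ * (‖v₁‖ + ‖v₂‖) :=
    calc α ≤ ‖w‖ * ‖v₂ - v₁‖ := h.trans (real_inner_le_norm _ _)
      _ ≤ ‖w‖ * (‖v₁‖ + ‖v₂‖) := by
        gcongr
        exact (norm_sub_le _ _).trans_eq (add_comm _ _)
  have hsq : α ^ 2 ≤ ‖w‖ ^ 2 * (‖v₁‖ + ‖v₂‖) ^ 2 := by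
    rw [← mul_pow]
    exact pow_le_pow_left₀ hα hle 2
  have hD : 0 ≤ D := (sq_nonneg _).trans hw
  rcases le_total ‖v₁‖ ‖v₂‖ with h12 | h12
  · right
    calc α ^ 2 ≤ ‖w‖ ^ 2 * (‖v₁‖ + ‖v₂‖) ^ 2 := hsq
      _ ≤ D * (2 * ‖v₂‖) ^ 2 := by gcongr; linarith
      _ = 4 * D * ‖v₂‖ ^ 2 := by ring
  · left
    calc α ^ 2 ≤ ‖w‖ ^ 2 * (‖v₁‖ + ‖v₂‖) ^ 2 := hsq
      _ ≤ D * (2 * ‖v₁‖) ^ 2 := by gcongr; linarith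
      _ = 4 * D * ‖v₁‖ ^ 2 := by ring

lemma sq_mul_div_le_of_sq_le_four_mul {α η m D b : ℝ} (hm : 0 ≤ m) (hηm : η ≤ m)
    (hD : 0 ≤ D) (hb : 0 ≤ b) (h : α ^ 2 ≤ 4 * D * b) :
    α ^ 2 * η / (4 * D) ≤ m * b :=
  calc α ^ 2 * η / (4 * D) ≤ α ^ 2 * m / (4 * D) := by gcongr
    _ = m * (α ^ 2 / (4 * D)) := by ring
    _ ≤ m * b := by
      gcongr
      exact div_le_of_le_mul₀ (by positivity) hb (by linarith)

variable [CompleteSpace E] {Ω : Type*} [MeasurableSpace Ω] {μ : Measure Ω} {S : Set Ω}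

lemma le_inner_setAverage {g : Ω → E} {w : E} {α : ℝ} (hS₀ : μ S ≠ 0) (hS : μ S ≠ ⊤)
    (hg : IntegrableOn g S μ) (h : ∀ᵐ ω ∂μ.restrict S, α ≤ ⟪w, g ω⟫) :
    α ≤ ⟪w, ⨍ ω in S, g ω ∂μ⟫ :=
  (convex_halfSpace_ge (innerₗ E w).isLinear α).set_average_mem
    (isClosed_le continuous_const (innerSL ℝ w).continuous) hS₀ hS h hg

lemma le_inner_setAverage_sub_setAverage {g₁ g₂ : Ω → E} {w : E} {α : ℝ} (hSm : MeasurableSet S)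
    (hS₀ : μ S ≠ 0) (hS : μ S ≠ ⊤) (hg₁ : IntegrableOn g₁ S μ) (hg₂ : IntegrableOn g₂ S μ)
    (h : ∀ ω ∈ S, α ≤ ⟪w, g₂ ω - g₁ ω⟫) :
    α ≤ ⟪w, (⨍ ω in S, g₂ ω ∂μ) - ⨍ ω in S, g₁ ω ∂μ⟫ := by
  rw [setAverage_eq, setAverage_eq, ← smul_sub, ← integral_sub hg₂ hg₁, ← setAverage_eq]
  exact le_inner_setAverage hS₀ hS (hg₂.sub hg₁) (ae_restrict_of_forall_mem hSm h)

end Disagreement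

theorem brier_improvement_from_large_disagreement_general
    {X : Type*} [MeasurableSpace X] {d K : ℕ}
    (𝒟 : Measure (X × EuclideanSpace ℝ (Fin d))) [IsProbabilityMeasure 𝒟]
    (hY : ∀ᵐ p ∂𝒟, ∀ j, p.2 j ∈ Set.Icc (0 : ℝ) 1)
    (f₁ f₂ : X → EuclideanSpace ℝ (Fin d))
    (hf₁_meas : Measurable f₁) (hf₂_meas : Measurable f₂)
    (hf₁_range : ∀ x j, f₁ x j ∈ Set.Icc (0 : ℝ) 1)
    (hf₂_range : ∀ x j, f₂ x j ∈ Set.Icc (0 : ℝ) 1)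
    (ℓ : Fin K → EuclideanSpace ℝ (Fin d)) (hℓ : ∀ a j, ℓ a j ∈ Set.Icc (0 : ℝ) 1)
    (π₁ π₂ : X → Fin K) (hπ₁_meas : Measurable π₁) (hπ₂_meas : Measurable π₂)
    (hπ₁ : ∀ x a, ⟪f₁ x, ℓ (π₁ x)⟫ ≤ ⟪f₁ x, ℓ a⟫)
    (hπ₂ : ∀ x a, ⟪f₂ x, ℓ (π₂ x)⟫ ≤ ⟪f₂ x, ℓ a⟫)
    (a₁ a₂ : Fin K) (α η : ℝ) (hα : 0 < α) (hη : 0 < η)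
    (E : Set X)
    (hE : E = {x | π₁ x = a₁ ∧ π₂ x = a₂ ∧
      (α < ⟪f₁ x, ℓ a₂ - ℓ a₁⟫ ∨ α < ⟪f₂ x, ℓ a₁ - ℓ a₂⟫)})
    (hμE : ENNReal.ofReal η ≤ (𝒟.map Prod.fst) E)
    (φ₁ φ₂ : EuclideanSpace ℝ (Fin d))
    (hφ₁ : φ₁ = ((𝒟.map Prod.fst) E).toReal⁻¹ •
      ∫ p in Prod.fst ⁻¹' E, (p.2 - f₁ p.1) ∂𝒟)
    (hφ₂ : φ₂ = ((𝒟.map Prod.fst) E).toReal⁻¹ •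
      ∫ p in Prod.fst ⁻¹' E, (p.2 - f₂ p.1) ∂𝒟)
    (f₁' f₂' : X → EuclideanSpace ℝ (Fin d))
    (hf₁' : ∀ x, f₁' x = projCube (f₁ x + Set.indicator E (fun _ => φ₁) x))
    (hf₂' : ∀ x, f₂' x = projCube (f₂ x + Set.indicator E (fun _ => φ₂) x)) :
    (∫ p, ‖f₁ p.1 - p.2‖ ^ 2 ∂𝒟) - (∫ p, ‖f₁' p.1 - p.2‖ ^ 2 ∂𝒟)
        ≥ α ^ 2 * η / (4 * d)
    ∨ (∫ p, ‖f₂ p.1 - p.2‖ ^ 2 ∂𝒟) - (∫ p, ‖f₂' p.1 - p.2‖ ^ 2 ∂𝒟)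
        ≥ α ^ 2 * η / (4 * d) := by
  have hEm : MeasurableSet E := by
    rw [hE]
    measurability
  have hμS : 𝒟 (Prod.fst ⁻¹' E) = (𝒟.map Prod.fst) E :=
    (Measure.map_apply measurable_fst hEm).symm
  have hmass : η ≤ 𝒟.real (Prod.fst ⁻¹' E) := by
    rw [measureReal_def, hμS]
    exact (ENNReal.ofReal_le_iff_le_toReal (measure_ne_top _ _)).mp hμE
  have hS₀ : 𝒟 (Prod.fst ⁻¹' E) ≠ 0 := by
    rw [hμS]
    exact ((ENNReal.ofReal_pos.mpr hη).trans_le hμE).ne'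
  rw [← hμS, ← measureReal_def, ← setAverage_eq] at hφ₁ hφ₂
  subst hφ₁ hφ₂
  have hsep := le_inner_setAverage_sub_setAverage (w := ℓ a₂ - ℓ a₁) (α := α)
    (measurable_fst hEm) hS₀ (measure_ne_top _ _) (integrableOn_residual hY hf₁_meas hf₁_range _)
    (integrableOn_residual hY hf₂_meas hf₂_range _) fun p hp => by
      rw [hE] at hp
      obtain ⟨h₁, h₂, h⟩ := hp
      rw [sub_sub_sub_cancel_left]
      exact (lt_inner_sub_of_best_responses (h₁ ▸ hπ₁ p.1 a₂) (h₂ ▸ hπ₂ p.1 a₁) h).le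
  have hgain {b : ℝ} (hb : 0 ≤ b) (h : α ^ 2 ≤ 4 * d * b) :
      α ^ 2 * η / (4 * d) ≤ 𝒟.real (Prod.fst ⁻¹' E) * b :=
    sq_mul_div_le_of_sq_le_four_mul (hη.le.trans hmass) hmass d.cast_nonneg hb h
  refine (sq_le_four_mul_norm_sq_of_le_inner_sub hα.le
    (norm_sub_sq_le_of_mem_Icc (hℓ a₂) (hℓ a₁)) hsep).imp (fun h => ?_) fun h => ?_
  · exact (hgain (sq_nonneg _) h).trans (brier_sub_brier_patch_ge hY hf₁_meas hf₁_range hEm hf₁')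
  · exact (hgain (sq_nonneg _) h).trans (brier_sub_brier_patch_ge hY hf₂_meas hf₂_range hEm hf₂')

/-- Guaranteed Brier improvement from a large disagreement event.  If
the disagreement event `E = E^α_{ℓ,a₁,a₂}(f₁,f₂)` has mass at least `η`, then for one of
the predictors `f_i`, patching it on `E` by the conditional mean residual
`φ_i = E[y - f_i(x) | E]` (projected back to the cube) decreases its Brier score by at
least `α²η/(4d)`. -/
theorem brier_improvement_from_large_disagreement
    {X : Type*} [MeasurableSpace X] {d K : ℕ} (hd : 0 < d)
    (𝒟 : Measure (X × EuclideanSpace ℝ (Fin d))) [IsProbabilityMeasure 𝒟]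
    (hY : ∀ᵐ p ∂𝒟, ∀ j, p.2 j ∈ Set.Icc (0 : ℝ) 1)
    (f₁ f₂ : X → EuclideanSpace ℝ (Fin d))
    (hf₁_meas : Measurable f₁) (hf₂_meas : Measurable f₂)
    (hf₁_range : ∀ x j, f₁ x j ∈ Set.Icc (0 : ℝ) 1)
    (hf₂_range : ∀ x j, f₂ x j ∈ Set.Icc (0 : ℝ) 1)
    (ℓ : Fin K → EuclideanSpace ℝ (Fin d)) (hℓ : ∀ a j, ℓ a j ∈ Set.Icc (0 : ℝ) 1)
    (π₁ π₂ : X → Fin K) (hπ₁_meas : Measurable π₁) (hπ₂_meas : Measurable π₂)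
    (hπ₁ : ∀ x a, ⟪f₁ x, ℓ (π₁ x)⟫ ≤ ⟪f₁ x, ℓ a⟫)
    (hπ₂ : ∀ x a, ⟪f₂ x, ℓ (π₂ x)⟫ ≤ ⟪f₂ x, ℓ a⟫)
    (a₁ a₂ : Fin K) (hne : a₁ ≠ a₂) (α η : ℝ) (hα : 0 < α) (hη : 0 < η)
    (E : Set X)
    (hE : E = {x | π₁ x = a₁ ∧ π₂ x = a₂ ∧
      (α < ⟪f₁ x, ℓ a₂ - ℓ a₁⟫ ∨ α < ⟪f₂ x, ℓ a₁ - ℓ a₂⟫)})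
    (hμE : ENNReal.ofReal η ≤ (𝒟.map Prod.fst) E)
    (φ₁ φ₂ : EuclideanSpace ℝ (Fin d))
    (hφ₁ : φ₁ = ((𝒟.map Prod.fst) E).toReal⁻¹ •
      ∫ p in Prod.fst ⁻¹' E, (p.2 - f₁ p.1) ∂𝒟)
    (hφ₂ : φ₂ = ((𝒟.map Prod.fst) E).toReal⁻¹ •
      ∫ p in Prod.fst ⁻¹' E, (p.2 - f₂ p.1) ∂𝒟)
    (f₁' f₂' : X → EuclideanSpace ℝ (Fin d))
    (hf₁' : ∀ x, f₁' x = projCube (f₁ x + Set.indicator E (fun _ => φ₁) x))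
    (hf₂' : ∀ x, f₂' x = projCube (f₂ x + Set.indicator E (fun _ => φ₂) x)) :
    (∫ p, ‖f₁ p.1 - p.2‖ ^ 2 ∂𝒟) - (∫ p, ‖f₁' p.1 - p.2‖ ^ 2 ∂𝒟)
        ≥ α ^ 2 * η / (4 * d)
    ∨ (∫ p, ‖f₂ p.1 - p.2‖ ^ 2 ∂𝒟) - (∫ p, ‖f₂' p.1 - p.2‖ ^ 2 ∂𝒟)
        ≥ α ^ 2 * η / (4 * d) :=
  brier_improvement_from_large_disagreement_general 𝒟 hY f₁ f₂ hf₁_meas hf₂_meas hf₁_range hf₂_range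
    ℓ hℓ π₁ π₂ hπ₁_meas hπ₂_meas hπ₁ hπ₂ a₁ a₂ α η hα hη E hE hμE φ₁ φ₂ hφ₁ hφ₂ f₁' f₂' hf₁' hf₂'
end

section
/- (Per-step empirical Brier decrease with a sufficiently fine grid.) Let c > 0 and let m be a positive integer with m ≥ √(d/(2c)). Let f : 𝒳 → [0,1]^d be a predictor, E ⊆ 𝒳 a measurable event with μ(E) > 0 under distribution D, φ = E_{(x,y)∼D}[y − f(x) | E], and φ̃ ∈ ℝ^d with |φ̃_j − φ_j| ≤ 1/(2m) for all j ∈ [d]. If ‖φ‖₂² · μ(E) > c, then the patched predictor f'(x) = proj_{[0,1]^d}(f(x) + φ̃·1_E(x)) satisfies B(f, D) − B(f', D) > c/2. In particular, with c = min{β², ηα²/(4d)} and Brier scores bounded in [0, d], any sequence of such patches has length at most 2d / min{β², ηα²/(4d)}. -/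
/-!
Outside `E` the patch changes nothing, and on `E` clamping to the cube only moves `f x + φ̃`
closer to the label `y ∈ [0,1]^d`, so pointwise
`‖f x - y‖² - ‖f' x - y‖² ≥ 2⟪φ̃, y - f x⟫ - ‖φ̃‖²`.
Integrating over `E` gives a Brier decrease of at least
`μ(E) (2⟪φ̃, φ⟫ - ‖φ̃‖²) = μ(E) ‖φ‖² - μ(E) ‖φ̃ - φ‖²`, and the grid condition
`m ≥ √(d/(2c))` gives `‖φ̃ - φ‖² ≤ d/(4m²) ≤ c/2`.
Since Brier scores lie in `[0,d]`, at most `2d/c` decreases by more than `c/2` fit in a row.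
-/

open MeasureTheory

open scoped RealInnerProductSpace

lemma lipschitzWith_clamp_unitInterval : LipschitzWith 1 (fun a : ℝ => min 1 (max 0 a)) :=
  (LipschitzWith.id.const_max 0).const_min 1

lemma abs_clamp_sub_le {a b : ℝ} (hb : b ∈ Set.Icc (0 : ℝ) 1) :
    |min 1 (max 0 a) - b| ≤ |a - b| := by
  simpa [Real.dist_eq, max_eq_right hb.1, min_eq_right hb.2] using
    lipschitzWith_clamp_unitInterval.dist_le_mul a b

lemma natCast_mul_le_sub_of_forall_le_sub {B : ℕ → ℝ} {δ : ℝ} {T : ℕ}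
    (h : ∀ t < T, δ ≤ B t - B (t + 1)) : T * δ ≤ B 0 - B T := by
  rw [← Finset.sum_range_sub']
  simpa using Finset.card_nsmul_le_sum (Finset.range T) _ δ
    fun t ht => h t (Finset.mem_range.mp ht)

section EuclideanCube

variable {d : ℕ}

lemma norm_sq_le_of_forall_abs_le {v : EuclideanSpace ℝ (Fin d)} {r : ℝ}
    (h : ∀ j, |v j| ≤ r) : ‖v‖ ^ 2 ≤ d * r ^ 2 := by
  rw [EuclideanSpace.real_norm_sq_eq]
  calc ∑ j, v j ^ 2 ≤ ∑ _j : Fin d, r ^ 2 :=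
        Finset.sum_le_sum fun j _ => sq_abs (v j) ▸ pow_le_pow_left₀ (abs_nonneg _) (h j) 2
    _ = d * r ^ 2 := by simp

lemma norm_sub_sq_le_of_mem_cube {a b : EuclideanSpace ℝ (Fin d)}
    (ha : ∀ j, a j ∈ Set.Icc (0 : ℝ) 1) (hb : ∀ j, b j ∈ Set.Icc (0 : ℝ) 1) :
    ‖a - b‖ ^ 2 ≤ d := by
  have h := norm_sq_le_of_forall_abs_le (v := a - b) fun j => by
    simpa only [PiLp.sub_apply] using
      abs_sub_le_of_nonneg_of_le (ha j).1 (ha j).2 (hb j).1 (hb j).2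
  rwa [one_pow, mul_one] at h

lemma card_mul_sq_inv_two_mul_le {c : ℝ} (hc : 0 < c) {m : ℕ} (hm : √(d / (2 * c)) ≤ m) :
    d * (1 / (2 * m)) ^ 2 ≤ c / 2 := by
  rcases m.eq_zero_or_pos with rfl | hm_pos
  · simpa using (half_pos hc).le
  rw [Real.sqrt_le_left (Nat.cast_nonneg m), div_le_iff₀ (by positivity)] at hm
  rw [div_pow, one_pow, mul_one_div, div_le_div_iff₀ (by positivity) two_pos]
  nlinarith

lemma projCube_apply (v : EuclideanSpace ℝ (Fin d)) (j : Fin d) :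
    projCube v j = min 1 (max 0 (v j)) := rfl

lemma projCube_mem (v : EuclideanSpace ℝ (Fin d)) (j : Fin d) :
    projCube v j ∈ Set.Icc (0 : ℝ) 1 :=
  ⟨le_min zero_le_one (le_max_left _ _), min_le_left _ _⟩

lemma projCube_eq_self {v : EuclideanSpace ℝ (Fin d)} (hv : ∀ j, v j ∈ Set.Icc (0 : ℝ) 1) :
    projCube v = v := by
  ext j
  rw [projCube_apply, max_eq_right (hv j).1, min_eq_right (hv j).2]

lemma continuous_projCube : Continuous (projCube (d := d)) := by
  unfold projCube
  fun_prop

lemma norm_projCube_sub_sq_le (v : EuclideanSpace ℝ (Fin d)) {y : EuclideanSpace ℝ (Fin d)}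
    (hy : ∀ j, y j ∈ Set.Icc (0 : ℝ) 1) : ‖projCube v - y‖ ^ 2 ≤ ‖v - y‖ ^ 2 := by
  simp only [EuclideanSpace.real_norm_sq_eq, PiLp.sub_apply, projCube_apply]
  exact Finset.sum_le_sum fun j _ => sq_le_sq.mpr (abs_clamp_sub_le (hy j))

lemma norm_projCube_add_sub_sq_le (u v : EuclideanSpace ℝ (Fin d))
    {y : EuclideanSpace ℝ (Fin d)} (hy : ∀ j, y j ∈ Set.Icc (0 : ℝ) 1) :
    ‖projCube (u + v) - y‖ ^ 2 ≤ ‖u - y‖ ^ 2 - (2 * ⟪v, y - u⟫ - ‖v‖ ^ 2) := by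
  have hinner : ⟪u - y, v⟫ = -⟪v, y - u⟫ := by
    rw [real_inner_comm, ← inner_neg_right, neg_sub]
  calc ‖projCube (u + v) - y‖ ^ 2 ≤ ‖(u - y) + v‖ ^ 2 := by
        simpa only [add_sub_right_comm] using norm_projCube_sub_sq_le (u + v) hy
    _ = ‖u - y‖ ^ 2 - (2 * ⟪v, y - u⟫ - ‖v‖ ^ 2) := by
        rw [norm_add_sq_real, hinner]
        ring

end EuclideanCube

section Brier

variable {X : Type*} [MeasurableSpace X] {d : ℕ}
  (D : Measure (X × EuclideanSpace ℝ (Fin d))) [IsFiniteMeasure D]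
  {f : X → EuclideanSpace ℝ (Fin d)}

lemma integrable_norm_sub_sq_of_mem_cube (hY : ∀ᵐ p ∂D, ∀ j, p.2 j ∈ Set.Icc (0 : ℝ) 1)
    (hf : Measurable f) (hf_range : ∀ x j, f x j ∈ Set.Icc (0 : ℝ) 1) :
    Integrable (fun p => ‖f p.1 - p.2‖ ^ 2) D := by
  refine .of_bound
    (((hf.comp measurable_fst).sub measurable_snd).norm.pow_const 2).aestronglyMeasurable d ?_
  filter_upwards [hY] with p hp
  rw [Real.norm_of_nonneg (by positivity)]
  exact norm_sub_sq_le_of_mem_cube (hf_range p.1) hp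

lemma integrable_snd_sub_of_mem_cube (hY : ∀ᵐ p ∂D, ∀ j, p.2 j ∈ Set.Icc (0 : ℝ) 1)
    (hf : Measurable f) (hf_range : ∀ x j, f x j ∈ Set.Icc (0 : ℝ) 1) :
    Integrable (fun p => p.2 - f p.1) D := by
  refine .of_bound (measurable_snd.sub (hf.comp measurable_fst)).aestronglyMeasurable √d ?_
  filter_upwards [hY] with p hp
  exact Real.le_sqrt_of_sq_le (norm_sub_sq_le_of_mem_cube hp (hf_range p.1))

lemma integral_brier_sub_patch_ge (hY : ∀ᵐ p ∂D, ∀ j, p.2 j ∈ Set.Icc (0 : ℝ) 1)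
    (hf : Measurable f) (hf_range : ∀ x j, f x j ∈ Set.Icc (0 : ℝ) 1)
    {E : Set X} (hE : MeasurableSet E) (v : EuclideanSpace ℝ (Fin d)) :
    2 * ⟪v, ∫ p in Prod.fst ⁻¹' E, (p.2 - f p.1) ∂D⟫ - D.real (Prod.fst ⁻¹' E) * ‖v‖ ^ 2 ≤
      (∫ p, ‖f p.1 - p.2‖ ^ 2 ∂D) -
        ∫ p, ‖projCube (f p.1 + E.indicator (fun _ => v) p.1) - p.2‖ ^ 2 ∂D := by
  set S : Set (X × EuclideanSpace ℝ (Fin d)) := Prod.fst ⁻¹' E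
  have hS : MeasurableSet S := measurable_fst hE
  set gain : X × EuclideanSpace ℝ (Fin d) → ℝ := fun p => 2 * ⟪v, p.2 - f p.1⟫ - ‖v‖ ^ 2
  have hdiff := integrable_snd_sub_of_mem_cube D hY hf hf_range
  have hpatch_meas : Measurable fun x => projCube (f x + E.indicator (fun _ => v) x) :=
    continuous_projCube.measurable.comp (hf.add (measurable_const.indicator hE))
  have hgain_le : ∀ᵐ p ∂D, S.indicator gain p ≤
      ‖f p.1 - p.2‖ ^ 2 - ‖projCube (f p.1 + E.indicator (fun _ => v) p.1) - p.2‖ ^ 2 := by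
    filter_upwards [hY] with p hp
    by_cases hx : p.1 ∈ E
    · rw [Set.indicator_of_mem (show p ∈ S from hx), Set.indicator_of_mem hx]
      linarith [norm_projCube_add_sub_sq_le (f p.1) v hp]
    · rw [Set.indicator_of_notMem (show p ∉ S from hx), Set.indicator_of_notMem hx, add_zero,
        projCube_eq_self (hf_range p.1), sub_self]
  have hinner_int : Integrable (fun p => 2 * ⟪v, p.2 - f p.1⟫) D :=
    (hdiff.const_inner v).const_mul 2
  have hgain_int : Integrable gain D := hinner_int.sub (integrable_const _)
  have hf_int := integrable_norm_sub_sq_of_mem_cube D hY hf hf_range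
  have hpatch_int :=
    integrable_norm_sub_sq_of_mem_cube D hY hpatch_meas fun _ j => projCube_mem _ j
  calc 2 * ⟪v, ∫ p in S, (p.2 - f p.1) ∂D⟫ - D.real S * ‖v‖ ^ 2 = ∫ p in S, gain p ∂D := by
        rw [integral_sub hinner_int.integrableOn (integrable_const _), integral_const_mul,
          integral_inner hdiff.integrableOn, setIntegral_const, smul_eq_mul]
    _ = ∫ p, S.indicator gain p ∂D := (integral_indicator hS).symm
    _ ≤ ∫ p, (‖f p.1 - p.2‖ ^ 2 -
          ‖projCube (f p.1 + E.indicator (fun _ => v) p.1) - p.2‖ ^ 2) ∂D :=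
        integral_mono_ae (hgain_int.indicator hS) (hf_int.sub hpatch_int) hgain_le
    _ = _ := integral_sub hf_int hpatch_int

end Brier

theorem per_step_brier_decrease_with_fine_grid_general
    {X : Type*} [MeasurableSpace X] {d : ℕ}
    (D : Measure (X × EuclideanSpace ℝ (Fin d))) [IsProbabilityMeasure D]
    (hY : ∀ᵐ p ∂D, ∀ j, p.2 j ∈ Set.Icc (0 : ℝ) 1)
    (c : ℝ) (hc : 0 < c)
    (m : ℕ) (hm_fine : Real.sqrt (d / (2 * c)) ≤ m)
    (f : X → EuclideanSpace ℝ (Fin d)) (hf_meas : Measurable f)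
    (hf_range : ∀ x j, f x j ∈ Set.Icc (0 : ℝ) 1)
    (E : Set X) (hE_meas : MeasurableSet E)
    (φ : EuclideanSpace ℝ (Fin d))
    (hφ : φ = ((D.map Prod.fst) E).toReal⁻¹ •
      ∫ p in Prod.fst ⁻¹' E, (p.2 - f p.1) ∂D)
    (hbig : ‖φ‖ ^ 2 * ((D.map Prod.fst) E).toReal > c)
    (φt : EuclideanSpace ℝ (Fin d))
    (hφt : ∀ j, |φt j - φ j| ≤ 1 / (2 * m))
    (f' : X → EuclideanSpace ℝ (Fin d))
    (hf' : ∀ x, f' x = projCube (f x + Set.indicator E (fun _ => φt) x)) :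
    ((∫ p, ‖f p.1 - p.2‖ ^ 2 ∂D) - (∫ p, ‖f' p.1 - p.2‖ ^ 2 ∂D) > c / 2)
    ∧ (∀ (T : ℕ) (g : ℕ → X → EuclideanSpace ℝ (Fin d)),
        (∀ t ≤ T, 0 ≤ (∫ p, ‖g t p.1 - p.2‖ ^ 2 ∂D)
          ∧ (∫ p, ‖g t p.1 - p.2‖ ^ 2 ∂D) ≤ d) →
        (∀ t < T, (∫ p, ‖g t p.1 - p.2‖ ^ 2 ∂D)
          - (∫ p, ‖g (t + 1) p.1 - p.2‖ ^ 2 ∂D) > c / 2) →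
        (T : ℝ) ≤ 2 * d / c) := by
  obtain rfl : f' = fun x => projCube (f x + E.indicator (fun _ => φt) x) := funext hf'
  set μE := ((D.map Prod.fst) E).toReal
  have hμE_eq : μE = D.real (Prod.fst ⁻¹' E) := by
    rw [measureReal_def, ← Measure.map_apply measurable_fst hE_meas]
  have hμE_pos : 0 < μE := pos_of_mul_pos_right (hc.trans hbig) (by positivity)
  have hμE_le : μE ≤ 1 := hμE_eq ▸ measureReal_le_one
  have hmean : ∫ p in Prod.fst ⁻¹' E, (p.2 - f p.1) ∂D = μE • φ := by
    rw [hφ, smul_smul, mul_inv_cancel₀ hμE_pos.ne', one_smul]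
  have herr : ‖φt - φ‖ ^ 2 ≤ c / 2 :=
    (norm_sq_le_of_forall_abs_le hφt).trans (card_mul_sq_inv_two_mul_le hc hm_fine)
  refine ⟨?_, fun T g hB hdec => ?_⟩
  · have hgain := integral_brier_sub_patch_ge D hY hf_meas hf_range hE_meas φt
    rw [hmean, ← hμE_eq, real_inner_smul_right] at hgain
    have hpolar :
        μE * (2 * ⟪φt, φ⟫ - ‖φt‖ ^ 2) = μE * ‖φ‖ ^ 2 - μE * ‖φt - φ‖ ^ 2 := by
      rw [norm_sub_sq_real]
      ring
    have hshrink : μE * ‖φt - φ‖ ^ 2 ≤ ‖φt - φ‖ ^ 2 :=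
      mul_le_of_le_one_left (by positivity) hμE_le
    linarith
  · have hsteps := natCast_mul_le_sub_of_forall_le_sub fun t ht => (hdec t ht).le
    rw [le_div_iff₀ hc]
    linarith [(hB 0 T.zero_le).2, (hB T le_rfl).1]

/-- Per-step empirical Brier decrease with a sufficiently fine grid.
If `m ≥ √(d/(2c))` and the patch satisfies `‖φ‖₂²·μ(E) > c`, then patching with the
rounded offset `φ̃` (each coordinate within `1/(2m)` of `φ`) decreases the Brier score
by more than `c/2`.  In particular, since Brier scores lie in `[0,d]`, any sequence of
predictors each obtained from the previous one by such a patch has length at most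
`2d/c` (with `c = min{β², ηα²/(4d)}` in the paper). -/
theorem per_step_brier_decrease_with_fine_grid
    {X : Type*} [MeasurableSpace X] {d : ℕ}
    (D : Measure (X × EuclideanSpace ℝ (Fin d))) [IsProbabilityMeasure D]
    (hY : ∀ᵐ p ∂D, ∀ j, p.2 j ∈ Set.Icc (0 : ℝ) 1)
    (c : ℝ) (hc : 0 < c)
    (m : ℕ) (hm : 0 < m) (hm_fine : Real.sqrt (d / (2 * c)) ≤ m)
    (f : X → EuclideanSpace ℝ (Fin d)) (hf_meas : Measurable f)
    (hf_range : ∀ x j, f x j ∈ Set.Icc (0 : ℝ) 1)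
    (E : Set X) (hE_meas : MeasurableSet E) (hμE : 0 < (D.map Prod.fst) E)
    (φ : EuclideanSpace ℝ (Fin d))
    (hφ : φ = ((D.map Prod.fst) E).toReal⁻¹ •
      ∫ p in Prod.fst ⁻¹' E, (p.2 - f p.1) ∂D)
    (hbig : ‖φ‖ ^ 2 * ((D.map Prod.fst) E).toReal > c)
    (φt : EuclideanSpace ℝ (Fin d))
    (hφt : ∀ j, |φt j - φ j| ≤ 1 / (2 * m))
    (f' : X → EuclideanSpace ℝ (Fin d))
    (hf' : ∀ x, f' x = projCube (f x + Set.indicator E (fun _ => φt) x)) :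
    ((∫ p, ‖f p.1 - p.2‖ ^ 2 ∂D) - (∫ p, ‖f' p.1 - p.2‖ ^ 2 ∂D) > c / 2)
    ∧ (∀ (T : ℕ) (g : ℕ → X → EuclideanSpace ℝ (Fin d)),
        (∀ t ≤ T, 0 ≤ (∫ p, ‖g t p.1 - p.2‖ ^ 2 ∂D)
          ∧ (∫ p, ‖g t p.1 - p.2‖ ^ 2 ∂D) ≤ d) →
        (∀ t < T, (∫ p, ‖g t p.1 - p.2‖ ^ 2 ∂D)
          - (∫ p, ‖g (t + 1) p.1 - p.2‖ ^ 2 ∂D) > c / 2) →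
        (T : ℝ) ≤ 2 * d / c) :=
  per_step_brier_decrease_with_fine_grid_general D hY c hc m hm_fine f hf_meas hf_range E hE_meas φ
    hφ hbig φt hφt f' hf'
end
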